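/- Let B be a saturated DBA recognizing a prefix-independent objective W, and suppose q_max is a state that is both an α-free-maximum and an α-free-cycle-maximum. Define F = {c ∈ C | (q_max, c) ∈ α}. Then W = Büchi(F): an infinite word is in W if and only if it contains infinitely many colors from F. -/

import Mathlib

/-- Concatenate a finite word in front of an infinite word. -/
def extWord {C : Type} (w : List C) (s : ℕ → C) : ℕ → C :=
  fun n => if h : n < w.length then w.get ⟨n, h⟩ else s (n - w.length)

/-- Winning continuations `w⁻¹W` of a finite word `w` w.r.t. objective `W`. -/
def winCont {C : Type} (W : Set (ℕ → C)) (w : List C) : Set (ℕ → C) :=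
  {s | extWord w s ∈ W}

/-- The run of a deterministic automaton from state `q` on infinite word `s`. -/
def dbaRun {C Q : Type} (δ : Q → C → Q) (q : Q) (s : ℕ → C) : ℕ → Q
  | 0 => q
  | n + 1 => δ (dbaRun δ q s n) (s n)

/-- The set of infinite words accepted (Büchi condition on transitions `acc`) from state `q`. -/
def accFrom {C Q : Type} (δ : Q → C → Q) (acc : Q → C → Prop) (q : Q) : Set (ℕ → C) :=
  {s | ∀ N, ∃ n ≥ N, acc (dbaRun δ q s n) (s n)}

/-- Extension `δ*` of the transition function to finite words. -/
def dstar {C Q : Type} (δ : Q → C → Q) (q : Q) (w : List C) : Q := w.foldl δ q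

/-- `Safe(q)`: finite words whose run from `q` takes no Büchi transition. -/
def safeWords {C Q : Type} (δ : Q → C → Q) (acc : Q → C → Prop) (q : Q) : Set (List C) :=
  {w | ∀ (i : ℕ) (h : i < w.length), ¬ acc (dstar δ q (w.take i)) (w.get ⟨i, h⟩)}

/-- `SafeCycles(q)`: α-free words from `q` that return to `q`. -/
def safeCycles {C Q : Type} (δ : Q → C → Q) (acc : Q → C → Prop) (q : Q) : Set (List C) :=
  {w | w ∈ safeWords δ acc q ∧ dstar δ q w = q}

/-- A DBA is saturated if no strictly larger set of Büchi transitions recognizes the same language. -/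
def Saturated {C Q : Type} (δ : Q → C → Q) (acc : Q → C → Prop) (qinit : Q) : Prop :=
  ∀ acc' : Q → C → Prop, (∀ q c, acc q c → acc' q c) → acc' ≠ acc →
    accFrom δ acc' qinit ≠ accFrom δ acc qinit

/-- Prefix-independence of an objective. -/
def PrefixIndependent {C : Type} (W : Set (ℕ → C)) : Prop :=
  ∀ (w : List C) (s : ℕ → C), s ∈ W ↔ extWord w s ∈ W

/-- The Büchi condition: infinitely many letters in `F`. -/
def BuchiCond {C : Type} (F : Set C) : Set (ℕ → C) :=
  {s | ∀ N, ∃ n ≥ N, s n ∈ F}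

/-- DBA-recognizability of an objective. -/
def DBARecognizable {C : Type} (W : Set (ℕ → C)) : Prop :=
  ∃ (Q : Type) (_ : Fintype Q) (qinit : Q) (δ : Q → C → Q) (acc : Q → C → Prop),
    accFrom δ acc qinit = W

/-! A color outside `F` can be inserted into a safe cycle at `q_max`: saturation yields a safe
cycle at `q_max` starting with it, and cycle-maximality lets us splice it in at `q_max` after
rotating the cycle. Hence every `F`-free word is safe from `q_max`. A word of `W` with only
finitely many `F`-colors has, by prefix-independence, an `F`-free tail in `W`, the language of
the reachable state `q_max`; but that tail never takes an accepting transition from `q_max`.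
Conversely, maximality of `Safe(q_max)` makes every `F`-colored transition accepting from every
state. -/

variable {C Q : Type}

section Words

theorem extWord_length_add (w : List C) (s : ℕ → C) (n : ℕ) :
    extWord w s (w.length + n) = s n := by
  simp [extWord]

theorem map_range_extWord (w : List C) (s : ℕ → C) :
    (List.range w.length).map (extWord w s) = w :=
  List.ext_getElem (by simp) fun i h _ => by simp_all [extWord]

theorem extWord_map_range (s : ℕ → C) (N : ℕ) :
    extWord ((List.range N).map s) (fun n => s (N + n)) = s := by
  funext n
  by_cases h : n < N
  · simp [extWord, h]
  · simp only [extWord, List.length_map, List.length_range, h, dite_false]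
    congr 1
    omega

theorem PrefixIndependent.winCont_eq {W : Set (ℕ → C)} (hW : PrefixIndependent W)
    (w : List C) : winCont W w = W :=
  Set.ext fun s => (hW w s).symm

theorem PrefixIndependent.shift_mem {W : Set (ℕ → C)} (hW : PrefixIndependent W)
    {s : ℕ → C} (hs : s ∈ W) (N : ℕ) : (fun n => s (N + n)) ∈ W := by
  rwa [hW ((List.range N).map s), extWord_map_range]

end Words

section Runs

variable (δ : Q → C → Q)

theorem dstar_append (q : Q) (u v : List C) :
    dstar δ q (u ++ v) = dstar δ (dstar δ q u) v :=
  List.foldl_append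

theorem dstar_map_range (q : Q) (s : ℕ → C) (n : ℕ) :
    dstar δ q ((List.range n).map s) = dbaRun δ q s n := by
  induction n with
  | zero => rfl
  | succ n ih => rw [List.range_succ, List.map_append, dstar_append, ih]; rfl

theorem dbaRun_add (q : Q) (s : ℕ → C) (a n : ℕ) :
    dbaRun δ q s (a + n) = dbaRun δ (dbaRun δ q s a) (fun m => s (a + m)) n := by
  induction n with
  | zero => rfl
  | succ n ih => rw [← Nat.add_assoc, dbaRun, ih]; rfl

theorem dbaRun_extWord (q : Q) (w : List C) (s : ℕ → C) (n : ℕ) :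
    dbaRun δ q (extWord w s) (w.length + n) = dbaRun δ (dstar δ q w) s n := by
  have hprefix := dstar_map_range δ q (extWord w s) w.length
  rw [map_range_extWord] at hprefix
  rw [dbaRun_add, ← hprefix]
  simp only [extWord_length_add]

variable (acc : Q → C → Prop)

theorem accFrom_dstar (q : Q) (w : List C) :
    accFrom δ acc (dstar δ q w) = winCont (accFrom δ acc q) w := by
  ext s
  constructor
  · intro h N
    obtain ⟨n, hn, hacc⟩ := h N
    refine ⟨w.length + n, by omega, ?_⟩
    rwa [dbaRun_extWord, extWord_length_add]
  · intro h N
    obtain ⟨m, hm, hacc⟩ := h (w.length + N)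
    obtain ⟨n, rfl⟩ := Nat.exists_eq_add_of_le (le_of_add_le_left hm)
    rw [dbaRun_extWord, extWord_length_add] at hacc
    exact ⟨n, by omega, hacc⟩

theorem accFrom_mono {acc' : Q → C → Prop} (h : ∀ q c, acc q c → acc' q c) (q : Q) :
    accFrom δ acc q ⊆ accFrom δ acc' q :=
  fun _ hs N => (hs N).imp fun _ ⟨hn, hacc⟩ => ⟨hn, h _ _ hacc⟩

theorem buchiCond_subset_accFrom {F : Set C} (hF : ∀ q, ∀ c ∈ F, acc q c) (q : Q) :
    BuchiCond F ⊆ accFrom δ acc q :=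
  fun _ hs N => (hs N).imp fun _ ⟨hn, hc⟩ => ⟨hn, hF _ _ hc⟩

end Runs

section Safe

variable {δ : Q → C → Q} {acc : Q → C → Prop}

theorem nil_mem_safeWords (q : Q) : [] ∈ safeWords δ acc q :=
  fun i h => absurd h (Nat.not_lt_zero i)

theorem cons_mem_safeWords {q : Q} {c : C} {w : List C} :
    c :: w ∈ safeWords δ acc q ↔ ¬ acc q c ∧ w ∈ safeWords δ acc (δ q c) := by
  constructor
  · intro h
    exact ⟨by simpa [dstar] using h 0 (by simp),
      fun i hi => by simpa [dstar] using h (i + 1) (by simpa using hi)⟩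
  · rintro ⟨hc, hw⟩ (_ | i) hi
    · simpa [dstar] using hc
    · simpa [dstar] using hw i (by simpa using hi)

theorem append_mem_safeWords {q : Q} {u v : List C} :
    u ++ v ∈ safeWords δ acc q ↔
      u ∈ safeWords δ acc q ∧ v ∈ safeWords δ acc (dstar δ q u) := by
  induction u generalizing q with
  | nil => simp [nil_mem_safeWords, dstar]
  | cons c u ih => simp only [List.cons_append, cons_mem_safeWords, ih, dstar, List.foldl_cons,
      and_assoc]

theorem singleton_mem_safeWords {q : Q} {c : C} : [c] ∈ safeWords δ acc q ↔ ¬ acc q c := by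
  simp [cons_mem_safeWords, nil_mem_safeWords]

theorem map_range_mem_safeWords {q : Q} {s : ℕ → C} {n : ℕ} :
    (List.range n).map s ∈ safeWords δ acc q ↔ ∀ i < n, ¬ acc (dbaRun δ q s i) (s i) := by
  induction n with
  | zero => simp [nil_mem_safeWords]
  | succ n ih =>
    rw [List.range_succ, List.map_append, append_mem_safeWords, ih, dstar_map_range,
      List.map_singleton, singleton_mem_safeWords, Nat.forall_lt_succ_right]

theorem acc_of_safeWords_subset {p q : Q} (h : safeWords δ acc q ⊆ safeWords δ acc p)
    {c : C} (hc : acc p c) : acc q c := by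
  by_contra hq
  exact singleton_mem_safeWords.1 (h (singleton_mem_safeWords.2 hq)) hc

theorem notMem_accFrom_of_safeWords {q : Q} {F : Set C}
    (hsafe : ∀ w : List C, (∀ c ∈ w, c ∉ F) → w ∈ safeWords δ acc q)
    {s : ℕ → C} (hs : ∀ n, s n ∉ F) : s ∉ accFrom δ acc q := by
  intro h
  obtain ⟨n, -, hn⟩ := h 0
  have hw := hsafe ((List.range (n + 1)).map s) (by simp [hs])
  exact map_range_mem_safeWords.1 hw n n.lt_succ_self hn

theorem mem_safeCycles_rotate {q : Q} {u v : List C} (h : u ++ v ∈ safeCycles δ acc q) :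
    v ++ u ∈ safeCycles δ acc (dstar δ q u) := by
  obtain ⟨hs, hd⟩ := h
  rw [append_mem_safeWords] at hs
  rw [dstar_append] at hd
  exact ⟨append_mem_safeWords.2 ⟨hs.2, by rw [hd]; exact hs.1⟩, by rw [dstar_append, hd]⟩

theorem mem_safeCycles_insert {q : Q} {u v γ : List C} (h : u ++ v ∈ safeCycles δ acc q)
    (hγ : γ ∈ safeCycles δ acc (dstar δ q u)) : u ++ γ ++ v ∈ safeCycles δ acc q := by
  obtain ⟨hs, hd⟩ := h
  obtain ⟨hγs, hγd⟩ := hγ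
  rw [append_mem_safeWords] at hs
  rw [dstar_append] at hd
  refine ⟨?_, by rw [dstar_append, dstar_append, hγd, hd]⟩
  rw [append_mem_safeWords, append_mem_safeWords, dstar_append, hγd]
  exact ⟨⟨hs.1, hγs⟩, hs.2⟩

end Safe

section Saturation

variable {δ : Q → C → Q} {acc : Q → C → Prop}

/-- Making `(p, c)` accepting must accept a new word; between two late visits of that
transition, such a word runs through a safe cycle at `p` starting with `c`. -/
theorem Saturated.exists_cons_mem_safeCycles {qinit : Q} (hsat : Saturated δ acc qinit)
    {p : Q} {c : C} (hc : ¬ acc p c) : ∃ ρ : List C, c :: ρ ∈ safeCycles δ acc p := by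
  set acc' : Q → C → Prop := fun q d => acc q d ∨ (q = p ∧ d = c)
  have hne : acc' ≠ acc := fun h => hc (h ▸ Or.inr ⟨rfl, rfl⟩)
  obtain ⟨s, hs', hs⟩ : ∃ s ∈ accFrom δ acc' qinit, s ∉ accFrom δ acc qinit := by
    by_contra! h
    exact hsat acc' (fun _ _ => Or.inl) hne
      (subset_antisymm h (accFrom_mono δ acc (fun _ _ => Or.inl) qinit))
  obtain ⟨N, hN⟩ : ∃ N, ∀ n ≥ N, ¬ acc (dbaRun δ qinit s n) (s n) := by
    simpa [accFrom] using hs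
  have hvisit : ∀ M, ∃ n ≥ M, dbaRun δ qinit s n = p ∧ s n = c := fun M => by
    obtain ⟨n, hn, h | h⟩ := hs' (max M N)
    · exact absurd h (hN n (by omega))
    · exact ⟨n, by omega, h⟩
  obtain ⟨a, ha, hpa, hca⟩ := hvisit N
  obtain ⟨b, hb, hpb, -⟩ := hvisit (a + 1)
  obtain ⟨L, rfl⟩ : ∃ L, b = a + (L + 1) := ⟨b - a - 1, by omega⟩
  have hsafe : (List.range (L + 1)).map (fun m => s (a + m)) ∈ safeWords δ acc p := by
    rw [map_range_mem_safeWords, ← hpa]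
    intro i _
    rw [← dbaRun_add]
    exact hN _ (by omega)
  have hret : dstar δ p ((List.range (L + 1)).map (fun m => s (a + m))) = p := by
    rw [dstar_map_range, ← hpa, ← dbaRun_add, hpb, hpa]
  rw [List.range_succ_eq_map, List.map_cons, List.map_map, Nat.add_zero, hca] at hsafe hret
  exact ⟨_, hsafe, hret⟩

end Saturation

section CycleMaximum

variable {δ : Q → C → Q} {acc : Q → C → Prop} {qmax : Q}
  (hcyc : ∀ q, safeCycles δ acc q ⊆ safeCycles δ acc qmax)
include hcyc

theorem mem_safeCycles_insert_of_max {a b γ : List C} (hab : a ++ b ∈ safeCycles δ acc qmax)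
    (hγ : γ ∈ safeCycles δ acc qmax) : a ++ γ ++ b ∈ safeCycles δ acc qmax := by
  have hba := hcyc _ (mem_safeCycles_rotate hab)
  have hret : dstar δ (dstar δ qmax b) a = qmax := by rw [← dstar_append]; exact hba.2
  exact hcyc _ (mem_safeCycles_insert (mem_safeCycles_rotate hba) (by rwa [hret]))

theorem exists_append_mem_safeCycles
    (hY : ∀ c, ¬ acc qmax c → ∃ ρ : List C, c :: ρ ∈ safeCycles δ acc qmax)
    (w : List C) (hw : ∀ c ∈ w, ¬ acc qmax c) : ∃ b, w ++ b ∈ safeCycles δ acc qmax := by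
  induction w using List.reverseRecOn with
  | nil => exact ⟨[], nil_mem_safeWords qmax, rfl⟩
  | append_singleton w e ih =>
    obtain ⟨b, hb⟩ := ih fun c hc => hw c (by simp [hc])
    obtain ⟨ρ, hρ⟩ := hY e (hw e (by simp))
    refine ⟨ρ ++ b, ?_⟩
    simpa using mem_safeCycles_insert_of_max hcyc hb hρ

theorem mem_safeWords_of_forall_not_acc
    (hY : ∀ c, ¬ acc qmax c → ∃ ρ : List C, c :: ρ ∈ safeCycles δ acc qmax)
    (w : List C) (hw : ∀ c ∈ w, ¬ acc qmax c) : w ∈ safeWords δ acc qmax := by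
  obtain ⟨b, hb⟩ := exists_append_mem_safeCycles hcyc hY w hw
  exact (append_mem_safeWords.1 hb.1).1

end CycleMaximum

theorem stmt19_general {C Q : Type} (qinit : Q) (δ : Q → C → Q) (acc : Q → C → Prop)
    (W : Set (ℕ → C)) (hW : accFrom δ acc qinit = W)
    (hreach : ∀ q : Q, ∃ w : List C, dstar δ qinit w = q)
    (hsat : Saturated δ acc qinit)
    (hpi : PrefixIndependent W)
    (qmax : Q)
    (hmax : ∀ q : Q, safeWords δ acc q ⊆ safeWords δ acc qmax)
    (hcycmax : ∀ q : Q, safeCycles δ acc q ⊆ safeCycles δ acc qmax) :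
    W = BuchiCond {c | acc qmax c} := by
  have hWmax : accFrom δ acc qmax = W := by
    obtain ⟨w, rfl⟩ := hreach qmax
    rw [accFrom_dstar, hW, hpi.winCont_eq]
  have hsafe : ∀ w : List C, (∀ c ∈ w, ¬ acc qmax c) → w ∈ safeWords δ acc qmax :=
    mem_safeWords_of_forall_not_acc hcycmax fun _ => hsat.exists_cons_mem_safeCycles
  refine subset_antisymm (fun s hs => ?_) ?_
  · by_contra hB
    obtain ⟨N, hN⟩ : ∃ N, ∀ n ≥ N, ¬ acc qmax (s n) := by simpa [BuchiCond] using hB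
    have htail := hpi.shift_mem hs N
    rw [← hWmax] at htail
    exact notMem_accFrom_of_safeWords (F := {c | acc qmax c}) hsafe
      (fun n => hN (N + n) (Nat.le_add_right N n)) htail
  · rw [← hW]
    exact buchiCond_subset_accFrom δ acc (fun q _ hc => acc_of_safeWords_subset (hmax q) hc) qinit

/-- for a saturated DBA recognizing a prefix-independent objective `W`
(all states reachable), if `q_max` is both an α-free-maximum and an
α-free-cycle-maximum, then `W = Büchi(F)` with `F = {c | (q_max, c) ∈ α}`. -/
theorem stmt19 {C Q : Type} [Fintype Q] (qinit : Q) (δ : Q → C → Q) (acc : Q → C → Prop)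
    (W : Set (ℕ → C)) (hW : accFrom δ acc qinit = W)
    (hreach : ∀ q : Q, ∃ w : List C, dstar δ qinit w = q)
    (hsat : Saturated δ acc qinit)
    (hpi : PrefixIndependent W)
    (qmax : Q)
    (hmax : ∀ q : Q, safeWords δ acc q ⊆ safeWords δ acc qmax)
    (hcycmax : ∀ q : Q, safeCycles δ acc q ⊆ safeCycles δ acc qmax) :
    W = BuchiCond {c | acc qmax c} :=
  stmt19_general qinit δ acc W hW hreach hsat hpi qmax hmax hcycmax
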